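/- arXiv:2505.17251 — 3 statements merged into one kernel-verified Lean document; each statement's English description precedes it below -/
import Mathlib

section
/- Let E be a real inner product space, let m ≥ 1, let H₁, …, H_m ∈ E be nonzero vectors and h₁, …, h_m ∈ ℝ, and let z ∈ E satisfy ⟪H_i, z⟫ ≤ h_i for all i = 1, …, m. Then the distance from z to the complement of the polyhedron D = {y ∈ E | ⟪H_i, y⟫ ≤ h_i, i = 1, …, m} equals the minimum over the faces of the distances to the supporting hyperplanes: infDist(z, Dᶜ) = min_{1 ≤ i ≤ m} (h_i − ⟪H_i, z⟫)/‖H_i‖. -/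
/-!
The complement of the polyhedron is the finite union of the open halfspaces
`{y | h i < ⟪H i, y⟫}`, and the distance to a finite union of nonempty sets is the minimum of
the distances. For one halfspace, Cauchy–Schwarz gives the lower bound, and points
`z + s • H i` just beyond the boundary hyperplane attain it in the limit.
-/

open scoped RealInnerProductSpace

open Metric

theorem Metric.infDist_iUnion_eq_inf' {α ι : Type*} [PseudoMetricSpace α] [Fintype ι]
    (hι : (Finset.univ : Finset ι).Nonempty) (x : α) {s : ι → Set α}
    (hs : ∀ i, (s i).Nonempty) :
    infDist x (⋃ i, s i) = Finset.univ.inf' hι fun i => infDist x (s i) := by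
  obtain ⟨i₀, -⟩ := hι
  refine le_antisymm ?_ ?_
  · exact Finset.le_inf' _ _ fun i _ =>
      infDist_le_infDist_of_subset (Set.subset_iUnion s i) (hs i)
  · refine (le_infDist (Set.nonempty_iUnion.2 ⟨i₀, hs i₀⟩)).2 fun y hy => ?_
    obtain ⟨i, hi⟩ := Set.mem_iUnion.1 hy
    exact (Finset.inf'_le _ (Finset.mem_univ i)).trans (infDist_le_dist_of_mem hi)

section Halfspace

variable {E : Type*} [NormedAddCommGroup E] [InnerProductSpace ℝ E] {a z : E} {b : ℝ}

theorem sub_inner_le_norm_mul_dist {y : E} (hy : b < ⟪a, y⟫) :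
    b - ⟪a, z⟫ ≤ ‖a‖ * dist z y :=
  calc b - ⟪a, z⟫ ≤ ⟪a, y - z⟫ := by rw [inner_sub_right]; linarith
    _ ≤ ‖a‖ * ‖y - z‖ := real_inner_le_norm _ _
    _ = ‖a‖ * dist z y := by rw [dist_comm, dist_eq_norm]

theorem lt_inner_add_smul_div_norm (ha : a ≠ 0) {t : ℝ} (ht : (b - ⟪a, z⟫) / ‖a‖ < t) :
    b < ⟪a, z + (t / ‖a‖) • a⟫ := by
  have hpos : 0 < ‖a‖ := norm_pos_iff.2 ha
  rw [div_lt_iff₀ hpos] at ht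
  rw [inner_add_right, real_inner_smul_right, real_inner_self_eq_norm_sq, div_mul_eq_mul_div,
    pow_two, ← mul_assoc, mul_div_cancel_right₀ _ hpos.ne']
  linarith

theorem dist_self_add_smul_div_norm (ha : a ≠ 0) {t : ℝ} (ht : 0 ≤ t) :
    dist z (z + (t / ‖a‖) • a) = t := by
  rw [dist_self_add_right, norm_smul, norm_div, norm_norm, Real.norm_of_nonneg ht,
    div_mul_cancel₀ _ (norm_ne_zero_iff.2 ha)]

theorem nonempty_halfspace (ha : a ≠ 0) : {y | b < ⟪a, y⟫}.Nonempty :=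
  ⟨_, lt_inner_add_smul_div_norm (z := 0) ha (lt_add_one _)⟩

theorem infDist_halfspace_le (ha : a ≠ 0) (hz : ⟪a, z⟫ ≤ b) :
    infDist z {y | b < ⟪a, y⟫} ≤ (b - ⟪a, z⟫) / ‖a‖ := by
  have hd : 0 ≤ (b - ⟪a, z⟫) / ‖a‖ := div_nonneg (sub_nonneg.2 hz) (norm_nonneg a)
  refine le_of_forall_pos_le_add fun ε hε => ?_
  calc infDist z {y | b < ⟪a, y⟫}
      ≤ dist z (z + (((b - ⟪a, z⟫) / ‖a‖ + ε) / ‖a‖) • a) :=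
        infDist_le_dist_of_mem (lt_inner_add_smul_div_norm ha (lt_add_of_pos_right _ hε))
    _ = (b - ⟪a, z⟫) / ‖a‖ + ε := dist_self_add_smul_div_norm ha (add_nonneg hd hε.le)

theorem infDist_halfspace (ha : a ≠ 0) (hz : ⟪a, z⟫ ≤ b) :
    infDist z {y | b < ⟪a, y⟫} = (b - ⟪a, z⟫) / ‖a‖ := by
  refine le_antisymm (infDist_halfspace_le ha hz)
    ((le_infDist (nonempty_halfspace ha)).2 fun y hy => ?_)
  exact (div_le_iff₀' (norm_pos_iff.2 ha)).2 (sub_inner_le_norm_mul_dist hy)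

end Halfspace

/-- Distance from an interior point of a polyhedron to its complement equals the
minimum of the distances to the supporting hyperplanes of the faces. -/
theorem infDist_compl_polyhedron {E : Type*} [NormedAddCommGroup E] [InnerProductSpace ℝ E]
    (m : ℕ) (hm : 1 ≤ m) (H : Fin m → E) (hH : ∀ i, H i ≠ 0) (h : Fin m → ℝ)
    (z : E) (hz : ∀ i, ⟪H i, z⟫ ≤ h i) :
    Metric.infDist z {y : E | ∀ i, ⟪H i, y⟫ ≤ h i}ᶜ =
      Finset.univ.inf' ⟨⟨0, hm⟩, Finset.mem_univ _⟩
        (fun i => (h i - ⟪H i, z⟫) / ‖H i‖) := by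
  have hcompl : {y : E | ∀ i, ⟪H i, y⟫ ≤ h i}ᶜ = ⋃ i, {y | h i < ⟪H i, y⟫} := by
    ext y
    simp
  rw [hcompl, infDist_iUnion_eq_inf' ⟨⟨0, hm⟩, Finset.mem_univ _⟩ _
    fun i => nonempty_halfspace (hH i)]
  exact Finset.inf'_congr _ rfl fun i _ => infDist_halfspace (hH i) (hz i)
end

section
/- Let n, m be positive natural numbers, let P be a probability measure on ℝⁿ, let μ ∈ ℝⁿ, let Σ be a real symmetric positive definite n×n matrix, let q ≥ 0, let β ∈ [0, 1], and let a₁, …, a_m ∈ ℝⁿ and b₁, …, b_m ∈ ℝ. Suppose (i) P({x ∈ ℝⁿ | (x − μ)ᵀ Σ⁻¹ (x − μ) ≤ q}) ≥ β, and (ii) for every j = 1, …, m, ⟪a_j, μ⟫ + √(q · a_jᵀ Σ a_j) ≤ b_j. Then P({x ∈ ℝⁿ | ⟪a_j, x⟫ ≤ b_j for all j = 1, …, m}) ≥ β. -/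
open Matrix MeasureTheory

lemma posdef_cauchy_schwarz {n : ℕ} (S : Matrix (Fin n) (Fin n) ℝ) (hS : S.PosDef)
    (a w : Fin n → ℝ) :
    (a ⬝ᵥ S.mulVec w) ^ 2 ≤ (a ⬝ᵥ S.mulVec a) * (w ⬝ᵥ S.mulVec w) := by
  have hSt : S.transpose = S := by
    have h := hS.isHermitian.eq
    rwa [Matrix.conjTranspose_eq_transpose_of_trivial] at h
  have hsym : ∀ x y : Fin n → ℝ, x ⬝ᵥ S.mulVec y = y ⬝ᵥ S.mulVec x := by
    intro x y
    rw [Matrix.dotProduct_mulVec]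
    nth_rewrite 1 [← hSt]
    rw [Matrix.vecMul_transpose, dotProduct_comm]
  have hnonneg : ∀ t : ℝ, 0 ≤ (t • a + w) ⬝ᵥ S.mulVec (t • a + w) := by
    intro t
    have := hS.posSemidef.re_dotProduct_nonneg (t • a + w)
    simpa using this
  by_cases ha : a = 0
  · subst ha
    have h0 := hS.posSemidef.re_dotProduct_nonneg w
    simp at h0 ⊢
  · have hA : 0 < a ⬝ᵥ S.mulVec a := by
      have := hS.re_dotProduct_pos (x := a) ha
      simpa using this
    set A := a ⬝ᵥ S.mulVec a with hAdef
    set B := a ⬝ᵥ S.mulVec w with hBdef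
    set C := w ⬝ᵥ S.mulVec w with hCdef
    have hexp : ∀ t : ℝ, (t • a + w) ⬝ᵥ S.mulVec (t • a + w)
        = t ^ 2 * A + 2 * t * B + C := by
      intro t
      simp only [Matrix.mulVec_add, Matrix.mulVec_smul, add_dotProduct,
        dotProduct_add, smul_dotProduct, dotProduct_smul, smul_eq_mul,
        hAdef, hBdef, hCdef]
      rw [hsym w a]
      ring
    have h0 := hnonneg (-(B / A))
    rw [hexp] at h0
    have h1 : (-(B / A)) ^ 2 * A + 2 * (-(B / A)) * B = -(B ^ 2 / A) := by
      field_simp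
      ring
    rw [h1] at h0
    have h2 : B ^ 2 / A ≤ C := by linarith
    calc B ^ 2 = (B ^ 2 / A) * A := by field_simp
      _ ≤ C * A := by gcongr
      _ = A * C := mul_comm _ _

lemma ellipsoid_dot_bound {n : ℕ} (S : Matrix (Fin n) (Fin n) ℝ) (hS : S.PosDef)
    (q : ℝ) (hq : 0 ≤ q) (a v : Fin n → ℝ) (hv : v ⬝ᵥ S⁻¹.mulVec v ≤ q) :
    a ⬝ᵥ v ≤ Real.sqrt (q * (a ⬝ᵥ S.mulVec a)) := by
  have hSS : S * S⁻¹ = 1 := Matrix.mul_nonsing_inv S (isUnit_iff_ne_zero.mpr hS.det_pos.ne')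
  set w : Fin n → ℝ := S⁻¹.mulVec v with hw
  have hSw : S.mulVec w = v := by
    rw [hw, Matrix.mulVec_mulVec, hSS, Matrix.one_mulVec]
  have hcs := posdef_cauchy_schwarz S hS a w
  rw [hSw] at hcs
  have hwv : w ⬝ᵥ v ≤ q := by rwa [dotProduct_comm]
  have hA : 0 ≤ a ⬝ᵥ S.mulVec a := by
    have := hS.posSemidef.re_dotProduct_nonneg a; simpa using this
  have hcs2 : (a ⬝ᵥ v) ^ 2 ≤ q * (a ⬝ᵥ S.mulVec a) := by
    calc (a ⬝ᵥ v) ^ 2 ≤ (a ⬝ᵥ S.mulVec a) * (w ⬝ᵥ v) := hcs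
      _ ≤ (a ⬝ᵥ S.mulVec a) * q := by gcongr
      _ = q * (a ⬝ᵥ S.mulVec a) := mul_comm _ _
  calc a ⬝ᵥ v ≤ |a ⬝ᵥ v| := le_abs_self _
    _ = Real.sqrt ((a ⬝ᵥ v) ^ 2) := (Real.sqrt_sq_eq_abs _).symm
    _ ≤ Real.sqrt (q * (a ⬝ᵥ S.mulVec a)) := Real.sqrt_le_sqrt hcs2

/-- Deterministic reformulation of polyhedral chance constraints via ellipsoidal
confidence sets: if the confidence ellipsoid has probability at least `β` and every
linear constraint is tightened by the ellipsoidal margin, then the polyhedron has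
probability at least `β`. -/
theorem chance_constraint_ellipsoidal_tightening (n m : ℕ) (hn : 0 < n) (hm : 0 < m)
    (P : Measure (Fin n → ℝ)) [IsProbabilityMeasure P]
    (μ : Fin n → ℝ) (S : Matrix (Fin n) (Fin n) ℝ) (hS : S.PosDef)
    (q : ℝ) (hq : 0 ≤ q) (β : ℝ) (hβ : β ∈ Set.Icc (0 : ℝ) 1)
    (a : Fin m → Fin n → ℝ) (b : Fin m → ℝ)
    (h1 : ENNReal.ofReal β ≤ P {x | (x - μ) ⬝ᵥ S⁻¹.mulVec (x - μ) ≤ q})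
    (h2 : ∀ j, a j ⬝ᵥ μ + Real.sqrt (q * (a j ⬝ᵥ S.mulVec (a j))) ≤ b j) :
    ENNReal.ofReal β ≤ P {x | ∀ j, a j ⬝ᵥ x ≤ b j} := by
  refine le_trans h1 (measure_mono ?_)
  intro x hx j
  simp only [Set.mem_setOf_eq] at hx
  have hb := ellipsoid_dot_bound S hS q hq (a j) (x - μ) hx
  have hx' : a j ⬝ᵥ x = a j ⬝ᵥ μ + a j ⬝ᵥ (x - μ) := by
    rw [← dotProduct_add]
    congr 1
    abel
  linarith [h2 j]
end

section
/- Let n be a positive natural number and let G be the standard Gaussian measure on ℝⁿ, i.e., the n-fold product of the real Gaussian measure with mean 0 and variance 1. Then the pushforward of G under the map x ↦ ∑_{i=1}^n x_i² is the Gamma distribution with shape parameter n/2 and rate parameter 1/2 (the chi-squared distribution with n degrees of freedom). -/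
open MeasureTheory ProbabilityTheory

/-!
Moment generating functions determine a probability measure on `ℝ` as soon as they are finite
and agree on an open interval around `0`: the complex moment generating functions are then
analytic on the corresponding vertical strip and agree on a real segment, hence on the imaginary
axis, where they are the characteristic functions. By Fubini, the mgf of `∑ i, x i ^ 2` under the
product measure is the `n`-th power of that of `x ^ 2` under `N(0, 1)`, which a Gaussian integral
evaluates to `(1 - 2t)^(-1/2)`; the Gamma integral gives `(1 - 2t)^(-n/2)` for the Gamma measure
with shape `n/2` and rate `1/2`.
-/

open Real Set Filter Topology
open scoped NNReal

theorem MeasureTheory.Measure.ext_of_mgf_eqOn {μ ν : Measure ℝ} [IsProbabilityMeasure μ]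
    [IsProbabilityMeasure ν] {a b : ℝ} (ha : a < 0) (hb : 0 < b)
    (hμ : ∀ t ∈ Ioo a b, Integrable (fun x ↦ exp (t * x)) μ)
    (h : EqOn (mgf id μ) (mgf id ν) (Ioo a b)) : μ = ν := by
  have hν : ∀ t ∈ Ioo a b, Integrable (fun x ↦ exp (t * x)) ν := fun t ht ↦
    mgf_pos_iff.mp (h ht ▸ mgf_pos (hμ t ht))
  have hstrip {ρ : Measure ℝ} (hρ : ∀ t ∈ Ioo a b, Integrable (fun x ↦ exp (t * x)) ρ) :
      AnalyticOnNhd ℂ (complexMGF id ρ) {z | z.re ∈ Ioo a b} :=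
    analyticOnNhd_complexMGF.mono fun z hz ↦ interior_maximal hρ isOpen_Ioo hz
  have hofReal : Tendsto ((↑) : ℝ → ℂ) (𝓝[≠] 0) (𝓝[≠] 0) := by
    simpa using (Complex.continuous_ofReal.continuousWithinAt (s := {0}ᶜ) (x := 0))
      |>.tendsto_nhdsWithin (t := {0}ᶜ) fun x hx ↦ by simpa using hx
  have hreal : ∃ᶠ z in 𝓝[≠] (0 : ℂ), complexMGF id μ z = complexMGF id ν z := by
    refine hofReal.frequently <|
      (eventually_nhdsWithin_of_eventually_nhds (Ioo_mem_nhds ha hb)).frequently.mono ?_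
    intro t ht
    rw [complexMGF_ofReal, complexMGF_ofReal, h ht]
  have hEq := (hstrip hμ).eqOn_of_preconnected_of_frequently_eq (hstrip hν)
    ((convex_Ioo a b).linear_preimage Complex.reLm).isPreconnected (z₀ := 0) (by simp [ha, hb])
    hreal
  refine Measure.ext_of_charFun (funext fun t ↦ ?_)
  rw [← complexMGF_id_mul_I, ← complexMGF_id_mul_I]
  exact hEq (by simp [ha, hb])

lemma mgf_sum_pi_eq_pow {ι Ω : Type*} [Fintype ι] [MeasurableSpace Ω] (μ : Measure Ω)
    [SigmaFinite μ] (f : Ω → ℝ) (t : ℝ) :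
    mgf (fun x : ι → Ω ↦ ∑ i, f (x i)) (Measure.pi fun _ ↦ μ) t =
      mgf f μ t ^ Fintype.card ι := by
  simp_rw [mgf, Finset.mul_sum, Real.exp_sum]
  exact integral_fintype_prod_eq_pow (μ := μ) fun ω ↦ exp (t * f ω)

lemma mgf_id_gammaMeasure {a r t : ℝ} (ha : 0 < a) (hr : 0 < r) (ht : t < r) :
    mgf id (gammaMeasure a r) t = (r / (r - t)) ^ a := by
  have hrt : 0 < r - t := sub_pos.2 ht
  rw [mgf, gammaMeasure, integral_withDensity_eq_integral_toReal_smul (f := gammaPDF a r)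
    (measurable_gammaPDFReal a r).ennreal_ofReal (ae_of_all _ fun _ ↦ ENNReal.ofReal_lt_top)]
  simp_rw [gammaPDF, ENNReal.toReal_ofReal (gammaPDFReal_nonneg ha hr _), smul_eq_mul, id]
  calc ∫ x, gammaPDFReal a r x * exp (t * x)
      = ∫ x in Ioi 0, r ^ a / Gamma a * (x ^ (a - 1) * exp (-((r - t) * x))) := by
        rw [← integral_Ici_eq_integral_Ioi, ← setIntegral_eq_integral_of_forall_compl_eq_zero
          fun x (hx : ¬ 0 ≤ x) ↦ by rw [gammaPDFReal, if_neg hx, zero_mul]]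
        refine setIntegral_congr_fun measurableSet_Ici fun x (hx : 0 ≤ x) ↦ ?_
        rw [gammaPDFReal, if_pos hx, mul_assoc, mul_assoc, ← exp_add]
        ring_nf
    _ = r ^ a / Gamma a * ((1 / (r - t)) ^ a * Gamma a) := by
        rw [integral_const_mul, integral_rpow_mul_exp_neg_mul_Ioi ha hrt]
    _ = (r / (r - t)) ^ a := by
        rw [div_rpow hr.le hrt.le, div_rpow zero_le_one hrt.le, one_rpow]
        field_simp [(Gamma_pos_of_pos ha).ne']

lemma integrable_exp_mul_gammaMeasure {a r t : ℝ} (ha : 0 < a) (hr : 0 < r) (ht : t < r) :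
    Integrable (fun x ↦ exp (t * x)) (gammaMeasure a r) := by
  have := isProbabilityMeasure_gammaMeasure ha hr
  refine (mgf_pos_iff (X := id)).mp ?_
  rw [mgf_id_gammaMeasure ha hr ht]
  exact rpow_pos_of_pos (div_pos hr (sub_pos.2 ht)) a

lemma mgf_sq_gaussianReal {v : ℝ≥0} (hv : v ≠ 0) {t : ℝ} (ht : 2 * v * t < 1) :
    mgf (fun x ↦ x ^ 2) (gaussianReal 0 v) t = (1 - 2 * v * t) ^ (-(1 / 2 : ℝ)) := by
  have hv' : (0 : ℝ) < v := by positivity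
  have hvt : 0 < 1 - 2 * v * t := sub_pos.2 ht
  rw [mgf, integral_gaussianReal_eq_integral_smul hv]
  calc ∫ x, gaussianPDFReal 0 v x • exp (t * x ^ 2)
      = ∫ x, (√(2 * π * v))⁻¹ * exp (-((1 - 2 * v * t) / (2 * v)) * x ^ 2) := by
        congr 1 with x
        rw [gaussianPDFReal, smul_eq_mul, mul_assoc, ← exp_add]
        congr 2
        field_simp
        ring
    _ = (√(2 * π * v))⁻¹ * √(π / ((1 - 2 * v * t) / (2 * v))) := by
        rw [integral_const_mul, integral_gaussian]
    _ = (1 - 2 * v * t) ^ (-(1 / 2 : ℝ)) := by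
        rw [rpow_neg hvt.le, ← sqrt_eq_rpow, div_div_eq_mul_div, sqrt_div' _ hvt.le,
          show π * (2 * (v : ℝ)) = 2 * π * v by ring]
        field_simp [(sqrt_pos.2 (by positivity : 0 < 2 * π * (v : ℝ))).ne']

/-- The squared Euclidean norm of a standard Gaussian vector in `ℝⁿ` is chi-squared
with `n` degrees of freedom, i.e., Gamma with shape `n/2` and rate `1/2`. -/
theorem squared_norm_gaussian_is_chiSquared (n : ℕ) (hn : 0 < n) :
    Measure.map (fun x : Fin n → ℝ => ∑ i, x i ^ 2)
      (Measure.pi fun _ : Fin n => gaussianReal 0 1) =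
      gammaMeasure ((n : ℝ) / 2) (1 / 2) := by
  have hshape : 0 < (n : ℝ) / 2 := by positivity
  have hsum : Measurable fun x : Fin n → ℝ ↦ ∑ i, x i ^ 2 := by fun_prop
  have := isProbabilityMeasure_gammaMeasure hshape one_half_pos
  have := Measure.isProbabilityMeasure_map (μ := Measure.pi fun _ : Fin n ↦ gaussianReal 0 1)
    hsum.aemeasurable
  refine (Measure.ext_of_mgf_eqOn (a := -1) (b := 1 / 2) (by norm_num) one_half_pos
    (fun t ht ↦ integrable_exp_mul_gammaMeasure hshape one_half_pos ht.2) fun t ht ↦ ?_).symm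
  have h1t : 0 < 1 - 2 * t := by linarith [ht.2]
  calc mgf id (gammaMeasure ((n : ℝ) / 2) (1 / 2)) t
      = ((1 - 2 * t) ^ (-(1 / 2 : ℝ))) ^ n := by
        rw [mgf_id_gammaMeasure hshape one_half_pos ht.2, ← rpow_natCast, ← rpow_mul h1t.le,
          show (1 / 2 : ℝ) / (1 / 2 - t) = (1 - 2 * t)⁻¹ by field_simp, inv_rpow h1t.le,
          ← rpow_neg h1t.le]
        ring_nf
    _ = mgf (fun x ↦ x ^ 2) (gaussianReal 0 1) t ^ Fintype.card (Fin n) := by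
        rw [mgf_sq_gaussianReal one_ne_zero (by simpa using h1t), NNReal.coe_one, mul_one,
          Fintype.card_fin]
    _ = mgf id (Measure.map (fun x : Fin n → ℝ ↦ ∑ i, x i ^ 2)
          (Measure.pi fun _ : Fin n ↦ gaussianReal 0 1)) t := by
        rw [mgf_id_map hsum.aemeasurable]
        exact (mgf_sum_pi_eq_pow _ _ t).symm
end
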